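/- Let 0 ≤ s ≤ 1/2 and for ζ(0) ∈ h^{1/2-s}₊ define S_B(t, ζ(0)) = (ζ_n(0) e^{i t ω_n(ζ(0))})_{n≥1}, where ω_n(ζ) = n² - 2Σ_k min(n,k)|ζ_k|². Then for each t ∈ ℝ, the map S_B^t : h^{1/2-s}₊ → h^{1/2-s}₊ is a homeomorphism with (S_B^t)⁻¹ = S_B^{-t}, it preserves the h^{1/2-s} norm, and satisfies the group property S_B^{t₁} ∘ S_B^{t₂} = S_B^{t₁+t₂}. -/

import Mathlib

open scoped BigOperators

/-- ω_n(ζ) = n² - 2 Σ_{k≥1} min(n,k)|ζ_k|², with (ζ_k)_{k≥1} represented by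
`ζ : ℕ → ℂ` via ζ_k = ζ (k-1); here `n : ℕ` stands for the paper index n+1. -/
noncomputable def omegaBO (n : ℕ) (ζ : ℕ → ℂ) : ℝ :=
  ((n : ℝ) + 1) ^ 2 - 2 * ∑' k : ℕ, min ((n : ℝ) + 1) ((k : ℝ) + 1) * ‖ζ k‖ ^ 2

/-- The Birkhoff flow S_B(t, ζ)_n = ζ_n e^{i t ω_n(ζ)}. -/
noncomputable def SB (t : ℝ) (ζ : ℕ → ℂ) : ℕ → ℂ :=
  fun n => ζ n * Complex.exp (Complex.I * (omegaBO n ζ : ℂ) * (t : ℂ))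

/-- Membership in h^σ₊ : Σ_{n≥1} n^{2σ}|ζ_n|² < ∞. -/
def memhp (σ : ℝ) (ζ : ℕ → ℂ) : Prop :=
  Summable fun n : ℕ => ((n : ℝ) + 1) ^ (2 * σ) * ‖ζ n‖ ^ 2

/-- The h^σ distance. -/
noncomputable def hdist (σ : ℝ) (ζ η : ℕ → ℂ) : ℝ :=
  Real.sqrt (∑' n : ℕ, ((n : ℝ) + 1) ^ (2 * σ) * ‖ζ n - η n‖ ^ 2)

/-!
The flow multiplies each coordinate by a unimodular phase, so it preserves every `‖ζ n‖`, hence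
every frequency `omegaBO n`; this gives norm preservation, and the group law because the phases
simply add. For continuity in `h^σ` with `σ ≥ 0` (so `h^σ ⊆ ℓ²`), split, with
`e_n(ζ) = phaseBO t ζ n`,
`ζ_n e_n(ζ) - η_n e_n(η) = ζ_n (e_n(ζ) - e_n(η)) + (ζ_n - η_n) e_n(η)`.
The second term is controlled by the `h^σ` distance. Each `omegaBO n` is continuous on `ℓ²`, by
Cauchy–Schwarz applied to `‖ζ_k‖² - ‖η_k‖²`, so the first term tends to `0` by dominated
convergence, with dominating sequence `4 (n+1)^{2σ} ‖ζ_n‖²`.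
-/

open Filter Topology

noncomputable def hnormSq (σ : ℝ) (ζ : ℕ → ℂ) : ℝ :=
  ∑' n : ℕ, ((n : ℝ) + 1) ^ (2 * σ) * ‖ζ n‖ ^ 2

lemma hnormSq_nonneg (σ : ℝ) (ζ : ℕ → ℂ) : 0 ≤ hnormSq σ ζ :=
  tsum_nonneg fun _ => by positivity

lemma hdist_eq_sqrt_hnormSq (σ : ℝ) (ζ η : ℕ → ℂ) : hdist σ ζ η = √(hnormSq σ (ζ - η)) := rfl

noncomputable def phaseBO (t : ℝ) (ζ : ℕ → ℂ) (n : ℕ) : ℂ :=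
  Complex.exp (Complex.I * (omegaBO n ζ : ℂ) * (t : ℂ))

section Flow

variable (t : ℝ) (ζ : ℕ → ℂ)

lemma norm_phaseBO (n : ℕ) : ‖phaseBO t ζ n‖ = 1 := by
  simp [phaseBO, Complex.norm_exp]

lemma SB_apply (n : ℕ) : SB t ζ n = ζ n * phaseBO t ζ n := rfl

lemma norm_SB_apply (n : ℕ) : ‖SB t ζ n‖ = ‖ζ n‖ := by
  rw [SB_apply, norm_mul, norm_phaseBO, mul_one]

lemma omegaBO_SB (n : ℕ) : omegaBO n (SB t ζ) = omegaBO n ζ := by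
  simp only [omegaBO, norm_SB_apply]

lemma memhp_SB_iff {σ : ℝ} : memhp σ (SB t ζ) ↔ memhp σ ζ := by
  simp only [memhp, norm_SB_apply]

lemma hnormSq_SB (σ : ℝ) : hnormSq σ (SB t ζ) = hnormSq σ ζ := by
  simp only [hnormSq, norm_SB_apply]

end Flow

lemma SB_SB (t₁ t₂ : ℝ) (ζ : ℕ → ℂ) : SB t₁ (SB t₂ ζ) = SB (t₁ + t₂) ζ := by
  funext n
  simp only [SB_apply, phaseBO, omegaBO_SB, mul_assoc, ← Complex.exp_add]
  push_cast
  ring_nf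

lemma SB_zero (ζ : ℕ → ℂ) : SB 0 ζ = ζ := by
  funext n
  simp [SB_apply, phaseBO]

section WeightedSpace

variable {σ : ℝ} {ζ η : ℕ → ℂ}

lemma one_le_weight (hσ : 0 ≤ σ) (n : ℕ) : 1 ≤ ((n : ℝ) + 1) ^ (2 * σ) :=
  Real.one_le_rpow (by linarith [n.cast_nonneg (α := ℝ)]) (by linarith)

lemma Summable.mul_norm_sub_sq {ι E : Type*} [SeminormedAddCommGroup E] {w : ι → ℝ}
    {a b : ι → E} (hw : ∀ i, 0 ≤ w i) (ha : Summable fun i => w i * ‖a i‖ ^ 2)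
    (hb : Summable fun i => w i * ‖b i‖ ^ 2) : Summable fun i => w i * ‖a i - b i‖ ^ 2 := by
  refine ((ha.add hb).mul_left 2).of_nonneg_of_le (fun i => mul_nonneg (hw i) (sq_nonneg _))
    fun i => ?_
  have hsq : ‖a i - b i‖ ^ 2 ≤ 2 * (‖a i‖ ^ 2 + ‖b i‖ ^ 2) :=
    (pow_le_pow_left₀ (norm_nonneg _) (norm_sub_le _ _) 2).trans add_sq_le
  nlinarith [hw i]

lemma memhp.sub (hζ : memhp σ ζ) (hη : memhp σ η) : memhp σ (ζ - η) :=
  Summable.mul_norm_sub_sq (fun _ => by positivity) hζ hη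

lemma memhp.summable_norm_sq (hσ : 0 ≤ σ) (hζ : memhp σ ζ) : Summable fun n => ‖ζ n‖ ^ 2 :=
  hζ.of_nonneg_of_le (fun _ => by positivity)
    fun n => le_mul_of_one_le_left (by positivity) (one_le_weight hσ n)

lemma memhp.tsum_norm_sq_le (hσ : 0 ≤ σ) (hζ : memhp σ ζ) :
    ∑' n, ‖ζ n‖ ^ 2 ≤ hnormSq σ ζ :=
  (hζ.summable_norm_sq hσ).tsum_le_tsum
    (fun n => le_mul_of_one_le_left (by positivity) (one_le_weight hσ n)) hζ

end WeightedSpace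

lemma summable_and_tsum_mul_le_sqrt_mul_sqrt {ι : Type*} {f g : ι → ℝ}
    (hf : ∀ i, 0 ≤ f i) (hg : ∀ i, 0 ≤ g i)
    (hf2 : Summable fun i => f i ^ 2) (hg2 : Summable fun i => g i ^ 2) :
    (Summable fun i => f i * g i) ∧ ∑' i, f i * g i ≤ √(∑' i, f i ^ 2) * √(∑' i, g i ^ 2) := by
  have := Real.summable_and_inner_le_Lp_mul_Lq_tsum_of_nonneg Real.HolderConjugate.two_two hf hg
    (by simpa only [Real.rpow_two] using hf2) (by simpa only [Real.rpow_two] using hg2)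
  simpa only [Real.rpow_two, ← Real.sqrt_eq_rpow] using this

lemma tsum_abs_norm_sq_sub_norm_sq_le {ι E : Type*} [SeminormedAddCommGroup E] {a b : ι → E}
    (ha : Summable fun i => ‖a i‖ ^ 2) (hab : Summable fun i => ‖a i - b i‖ ^ 2) :
    ∑' i, |‖a i‖ ^ 2 - ‖b i‖ ^ 2|
      ≤ ∑' i, ‖a i - b i‖ ^ 2 + 2 * √(∑' i, ‖a i‖ ^ 2) * √(∑' i, ‖a i - b i‖ ^ 2) := by
  obtain ⟨hprod, hCS⟩ := summable_and_tsum_mul_le_sqrt_mul_sqrt (fun i => norm_nonneg (a i))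
    (fun i => norm_nonneg (a i - b i)) ha hab
  have hpt : ∀ i, |‖a i‖ ^ 2 - ‖b i‖ ^ 2| ≤ ‖a i - b i‖ ^ 2 + 2 * (‖a i‖ * ‖a i - b i‖) := by
    intro i
    have h := abs_norm_sub_norm_le (a i) (b i)
    rw [abs_le] at h ⊢
    constructor <;> nlinarith [norm_nonneg (a i), norm_nonneg (b i), norm_nonneg (a i - b i)]
  have hsum := hab.add (hprod.mul_left 2)
  calc ∑' i, |‖a i‖ ^ 2 - ‖b i‖ ^ 2|
      ≤ ∑' i, (‖a i - b i‖ ^ 2 + 2 * (‖a i‖ * ‖a i - b i‖)) :=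
        (hsum.of_nonneg_of_le (fun _ => abs_nonneg _) hpt).tsum_le_tsum hpt hsum
    _ ≤ _ := by
        rw [hab.tsum_add (hprod.mul_left 2), tsum_mul_left, mul_assoc]
        gcongr

lemma abs_omegaBO_sub_le (n : ℕ) {ζ η : ℕ → ℂ} (hζ : Summable fun k => ‖ζ k‖ ^ 2)
    (hη : Summable fun k => ‖η k‖ ^ 2) :
    |omegaBO n ζ - omegaBO n η| ≤ 2 * ((n : ℝ) + 1) * ∑' k, |‖ζ k‖ ^ 2 - ‖η k‖ ^ 2| := by
  set c : ℕ → ℝ := fun k => min ((n : ℝ) + 1) ((k : ℝ) + 1)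
  have hc : ∀ k, |c k| ≤ (n : ℝ) + 1 := fun k => by
    rw [abs_of_nonneg (by positivity)]; exact min_le_left _ _
  have hweighted : ∀ {a : ℕ → ℂ}, (Summable fun k => ‖a k‖ ^ 2) →
      Summable fun k => c k * ‖a k‖ ^ 2 := fun ha =>
    (ha.mul_left ((n : ℝ) + 1)).of_norm_bounded fun k => by
      rw [norm_mul, norm_pow, norm_norm, Real.norm_eq_abs]
      exact mul_le_mul_of_nonneg_right (hc k) (by positivity)
  have hdiff : omegaBO n ζ - omegaBO n η = 2 * ∑' k, c k * (‖η k‖ ^ 2 - ‖ζ k‖ ^ 2) := by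
    simp only [omegaBO, mul_sub]
    rw [(hweighted hη).tsum_sub (hweighted hζ)]
    ring
  have hsum : Summable fun k => |‖ζ k‖ ^ 2 - ‖η k‖ ^ 2| :=
    (hζ.add hη).of_nonneg_of_le (fun _ => abs_nonneg _) fun k => by
      rw [abs_le]; constructor <;> nlinarith [sq_nonneg ‖ζ k‖, sq_nonneg ‖η k‖]
  rw [hdiff, abs_mul, abs_two, mul_assoc, ← tsum_mul_left]
  gcongr
  rw [← Real.norm_eq_abs]
  refine tsum_of_norm_bounded (hsum.mul_left _).hasSum fun k => ?_
  rw [Real.norm_eq_abs, abs_mul, abs_sub_comm]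
  exact mul_le_mul_of_nonneg_right (hc k) (abs_nonneg _)

lemma tendsto_omegaBO {l : Filter (ℕ → ℂ)} {ζ : ℕ → ℂ} (hζ : Summable fun k => ‖ζ k‖ ^ 2)
    (hl_mem : ∀ᶠ η in l, Summable fun k => ‖η k‖ ^ 2)
    (hl : Tendsto (fun η => ∑' k, ‖ζ k - η k‖ ^ 2) l (𝓝 0)) (n : ℕ) :
    Tendsto (omegaBO n) l (𝓝 (omegaBO n ζ)) := by
  set A := ∑' k, ‖ζ k‖ ^ 2
  have hbound : Tendsto (fun η => 2 * ((n : ℝ) + 1) * (∑' k, ‖ζ k - η k‖ ^ 2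
      + 2 * √A * √(∑' k, ‖ζ k - η k‖ ^ 2))) l (𝓝 0) := by
    have hg : Continuous fun x : ℝ => 2 * ((n : ℝ) + 1) * (x + 2 * √A * √x) := by fun_prop
    simpa [Function.comp_def] using (hg.tendsto 0).comp hl
  rw [tendsto_iff_norm_sub_tendsto_zero]
  refine squeeze_zero' (Eventually.of_forall fun _ => norm_nonneg _) ?_ hbound
  filter_upwards [hl_mem] with η hη
  have hζη : Summable fun k => ‖ζ k - η k‖ ^ 2 := by
    simpa using Summable.mul_norm_sub_sq (w := 1) (a := ζ) (b := η) (fun _ => zero_le_one)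
      (by simpa using hζ) (by simpa using hη)
  rw [Real.norm_eq_abs, abs_sub_comm]
  exact (abs_omegaBO_sub_le n hζ hη).trans <|
    mul_le_mul_of_nonneg_left (tsum_abs_norm_sq_sub_norm_sq_le hζ hζη) (by positivity)

lemma norm_phaseBO_sub_sq_le (t : ℝ) (ζ η : ℕ → ℂ) (n : ℕ) :
    ‖phaseBO t ζ n - phaseBO t η n‖ ^ 2 ≤ 4 := by
  have h : ‖phaseBO t ζ n - phaseBO t η n‖ ≤ 2 :=
    (norm_sub_le _ _).trans (by rw [norm_phaseBO, norm_phaseBO]; norm_num)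
  nlinarith [norm_nonneg (phaseBO t ζ n - phaseBO t η n)]

lemma norm_SB_sub_SB_sq_le (t : ℝ) (ζ η : ℕ → ℂ) (n : ℕ) :
    ‖SB t ζ n - SB t η n‖ ^ 2
      ≤ 2 * (‖ζ n‖ ^ 2 * ‖phaseBO t ζ n - phaseBO t η n‖ ^ 2) + 2 * ‖ζ n - η n‖ ^ 2 := by
  have hsplit : SB t ζ n - SB t η n
      = ζ n * (phaseBO t ζ n - phaseBO t η n) + (ζ n - η n) * phaseBO t η n := by
    rw [SB_apply, SB_apply]; ring
  have h : ‖SB t ζ n - SB t η n‖ ≤ ‖ζ n‖ * ‖phaseBO t ζ n - phaseBO t η n‖ + ‖ζ n - η n‖ := by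
    simpa only [hsplit, norm_mul, norm_phaseBO, mul_one] using
      norm_add_le (ζ n * (phaseBO t ζ n - phaseBO t η n)) ((ζ n - η n) * phaseBO t η n)
  simpa only [mul_pow, mul_add] using (pow_le_pow_left₀ (norm_nonneg _) h 2).trans add_sq_le

lemma tendsto_tsum_phaseBO_sub {σ : ℝ} (t : ℝ) {ζ : ℕ → ℂ} (hζ : memhp σ ζ)
    {l : Filter (ℕ → ℂ)} (hω : ∀ n, Tendsto (omegaBO n) l (𝓝 (omegaBO n ζ))) :
    Tendsto (fun η => ∑' n : ℕ, ((n : ℝ) + 1) ^ (2 * σ) * ‖ζ n‖ ^ 2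
      * ‖phaseBO t ζ n - phaseBO t η n‖ ^ 2) l (𝓝 0) := by
  have hlim : ∀ n : ℕ, Tendsto (fun η => ((n : ℝ) + 1) ^ (2 * σ) * ‖ζ n‖ ^ 2
      * ‖phaseBO t ζ n - phaseBO t η n‖ ^ 2) l (𝓝 0) := by
    intro n
    have hphase : Tendsto (fun η => phaseBO t η n) l (𝓝 (phaseBO t ζ n)) :=
      ((((hω n).ofReal).const_mul Complex.I).mul_const (t : ℂ)).cexp
    simpa using (((tendsto_const_nhds (x := phaseBO t ζ n)).sub hphase).norm.pow 2).const_mul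
      (((n : ℝ) + 1) ^ (2 * σ) * ‖ζ n‖ ^ 2)
  simpa using tendsto_tsum_of_dominated_convergence (hζ.mul_left 4) hlim
    (Eventually.of_forall fun η n => by
      rw [Real.norm_of_nonneg (by positivity), mul_comm 4]
      exact mul_le_mul_of_nonneg_left (norm_phaseBO_sub_sq_le t ζ η n) (by positivity))

lemma tendsto_hnormSq_SB_sub {σ : ℝ} (hσ : 0 ≤ σ) (t : ℝ) {ζ : ℕ → ℂ} (hζ : memhp σ ζ)
    {l : Filter (ℕ → ℂ)} (hl_mem : ∀ᶠ η in l, memhp σ η)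
    (hl : Tendsto (fun η => hnormSq σ (ζ - η)) l (𝓝 0)) :
    Tendsto (fun η => hnormSq σ (SB t ζ - SB t η)) l (𝓝 0) := by
  set w : ℕ → ℝ := fun n => ((n : ℝ) + 1) ^ (2 * σ)
  have hω : ∀ n, Tendsto (omegaBO n) l (𝓝 (omegaBO n ζ)) :=
    tendsto_omegaBO (hζ.summable_norm_sq hσ) (hl_mem.mono fun _ hη => hη.summable_norm_sq hσ)
      (squeeze_zero' (Eventually.of_forall fun _ => tsum_nonneg fun _ => sq_nonneg _)
        (hl_mem.mono fun η hη => (hζ.sub hη).tsum_norm_sq_le hσ) hl)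
  refine squeeze_zero' (Eventually.of_forall fun _ => hnormSq_nonneg _ _) ?_
    (by simpa using ((tendsto_tsum_phaseBO_sub t hζ hω).const_mul 2).add (hl.const_mul 2))
  filter_upwards [hl_mem] with η hη
  have hsum_phase : Summable fun n => w n * ‖ζ n‖ ^ 2 * ‖phaseBO t ζ n - phaseBO t η n‖ ^ 2 :=
    (hζ.mul_left 4).of_nonneg_of_le (fun _ => by positivity) fun n => by
      rw [mul_comm 4]
      exact mul_le_mul_of_nonneg_left (norm_phaseBO_sub_sq_le t ζ η n) (by positivity)
  have hsum_sub : Summable fun n => w n * ‖ζ n - η n‖ ^ 2 := hζ.sub hη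
  have hsum_SB : Summable fun n => w n * ‖SB t ζ n - SB t η n‖ ^ 2 :=
    ((memhp_SB_iff t ζ).2 hζ).sub ((memhp_SB_iff t η).2 hη)
  calc hnormSq σ (SB t ζ - SB t η)
      ≤ ∑' n, (2 * (w n * ‖ζ n‖ ^ 2 * ‖phaseBO t ζ n - phaseBO t η n‖ ^ 2)
          + 2 * (w n * ‖ζ n - η n‖ ^ 2)) :=
        hsum_SB.tsum_le_tsum (fun n => by
          refine (mul_le_mul_of_nonneg_left (norm_SB_sub_SB_sq_le t ζ η n)
            (by positivity : 0 ≤ w n)).trans_eq ?_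
          ring)
          ((hsum_phase.mul_left 2).add (hsum_sub.mul_left 2))
    _ = _ := by
        rw [(hsum_phase.mul_left 2).tsum_add (hsum_sub.mul_left 2), tsum_mul_left, tsum_mul_left]
        rfl

lemma exists_hdist_SB_lt {σ : ℝ} (hσ : 0 ≤ σ) (t : ℝ) {ζ : ℕ → ℂ} (hζ : memhp σ ζ)
    {ε : ℝ} (hε : 0 < ε) :
    ∃ δ : ℝ, 0 < δ ∧ ∀ η : ℕ → ℂ, memhp σ η → hdist σ ζ η < δ →
      hdist σ (SB t ζ) (SB t η) < ε := by
  set l := comap (fun η => hnormSq σ (ζ - η)) (𝓝 0) ⊓ 𝓟 {η | memhp σ η}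
  have hl : Tendsto (fun η => hnormSq σ (SB t ζ - SB t η)) l (𝓝 0) :=
    tendsto_hnormSq_SB_sub hσ t hζ (mem_inf_of_right (mem_principal_self _))
      (tendsto_comap.mono_left inf_le_left)
  obtain ⟨δ, hδ, hball⟩ := (((Metric.nhds_basis_ball.comap _).inf_principal _).tendsto_iff
    Metric.nhds_basis_ball).1 hl (ε ^ 2) (by positivity)
  refine ⟨√δ, Real.sqrt_pos.2 hδ, fun η hη hdist_lt => ?_⟩
  rw [hdist_eq_sqrt_hnormSq, Real.sqrt_lt_sqrt_iff (hnormSq_nonneg _ _)] at hdist_lt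
  have h := hball η ⟨by simpa [abs_of_nonneg (hnormSq_nonneg _ _)] using hdist_lt, hη⟩
  rw [hdist_eq_sqrt_hnormSq, Real.sqrt_lt' hε]
  simpa [abs_of_nonneg (hnormSq_nonneg _ _)] using h

theorem stmt14_general (s : ℝ) (hs : s ≤ 1/2) (t : ℝ) :
    (∀ ζ : ℕ → ℂ, memhp (1/2 - s) ζ → memhp (1/2 - s) (SB t ζ)) ∧
    (∀ ζ : ℕ → ℂ, memhp (1/2 - s) ζ → SB (-t) (SB t ζ) = ζ ∧ SB t (SB (-t) ζ) = ζ) ∧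
    (∀ ζ : ℕ → ℂ, memhp (1/2 - s) ζ →
      (∑' n : ℕ, ((n : ℝ) + 1) ^ (2 * (1/2 - s)) * ‖SB t ζ n‖ ^ 2)
        = ∑' n : ℕ, ((n : ℝ) + 1) ^ (2 * (1/2 - s)) * ‖ζ n‖ ^ 2) ∧
    (∀ t₁ t₂ : ℝ, ∀ ζ : ℕ → ℂ, memhp (1/2 - s) ζ → SB t₁ (SB t₂ ζ) = SB (t₁ + t₂) ζ) ∧
    (∀ ζ : ℕ → ℂ, memhp (1/2 - s) ζ → ∀ ε : ℝ, 0 < ε → ∃ δ : ℝ, 0 < δ ∧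
      ∀ η : ℕ → ℂ, memhp (1/2 - s) η → hdist (1/2 - s) ζ η < δ →
        hdist (1/2 - s) (SB t ζ) (SB t η) < ε) := by
  have hσ : 0 ≤ 1/2 - s := by linarith
  refine ⟨fun ζ hζ => (memhp_SB_iff t ζ).2 hζ, fun ζ _ => ⟨?_, ?_⟩,
    fun ζ _ => hnormSq_SB t ζ _, fun t₁ t₂ ζ _ => SB_SB t₁ t₂ ζ,
    fun ζ hζ ε hε => exists_hdist_SB_lt hσ t hζ hε⟩
  · rw [SB_SB, neg_add_cancel, SB_zero]
  · rw [SB_SB, add_neg_cancel, SB_zero]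

/-- For 0 ≤ s ≤ 1/2 and σ = 1/2 - s, each time-t flow map S_B^t maps h^σ₊ into itself,
is a homeomorphism with inverse S_B^{-t}, preserves the h^σ norm, and satisfies the
group property S_B^{t₁} ∘ S_B^{t₂} = S_B^{t₁+t₂}. -/
theorem stmt14 (s : ℝ) (hs0 : 0 ≤ s) (hs : s ≤ 1/2) (t : ℝ) :
    (∀ ζ : ℕ → ℂ, memhp (1/2 - s) ζ → memhp (1/2 - s) (SB t ζ)) ∧
    (∀ ζ : ℕ → ℂ, memhp (1/2 - s) ζ → SB (-t) (SB t ζ) = ζ ∧ SB t (SB (-t) ζ) = ζ) ∧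
    (∀ ζ : ℕ → ℂ, memhp (1/2 - s) ζ →
      (∑' n : ℕ, ((n : ℝ) + 1) ^ (2 * (1/2 - s)) * ‖SB t ζ n‖ ^ 2)
        = ∑' n : ℕ, ((n : ℝ) + 1) ^ (2 * (1/2 - s)) * ‖ζ n‖ ^ 2) ∧
    (∀ t₁ t₂ : ℝ, ∀ ζ : ℕ → ℂ, memhp (1/2 - s) ζ → SB t₁ (SB t₂ ζ) = SB (t₁ + t₂) ζ) ∧
    (∀ ζ : ℕ → ℂ, memhp (1/2 - s) ζ → ∀ ε : ℝ, 0 < ε → ∃ δ : ℝ, 0 < δ ∧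
      ∀ η : ℕ → ℂ, memhp (1/2 - s) η → hdist (1/2 - s) ζ η < δ →
        hdist (1/2 - s) (SB t ζ) (SB t η) < ε) :=
  stmt14_general s hs t
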